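/- Let (q,t) be a symmetric, rank-preserving mechanism on D^H such that its restriction to the cone D(σ^I) = {v : v_1 > v_2 > … > v_n} is incentive compatible. Then (q,t) is incentive compatible on all of D^H. -/

import Mathlib

open Finset

noncomputable section

def dot {n : ℕ} (v w : Fin n → ℝ) : ℝ := ∑ i, v i * w i

/-- Strict type space: vectors in [vlo, vhi]^n with pairwise distinct coordinates. -/
def DH (n : ℕ) (vlo vhi : ℝ) : Set (Fin n → ℝ) :=
  {v | (∀ i, v i ∈ Set.Icc vlo vhi) ∧ Function.Injective v}

/-- The cone D(σ^I) of strictly decreasing strict types. -/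
def DconeI (n : ℕ) (vlo vhi : ℝ) : Set (Fin n → ℝ) :=
  {v | v ∈ DH n vlo vhi ∧ ∀ i j : Fin n, i < j → v i > v j}

def IC {n : ℕ} (D : Set (Fin n → ℝ)) (q : (Fin n → ℝ) → Fin n → ℝ)
    (t : (Fin n → ℝ) → ℝ) : Prop :=
  ∀ v ∈ D, ∀ v' ∈ D, dot v (q v) - t v ≥ dot v (q v') - t v'

def Symmetric' {n : ℕ} (D : Set (Fin n → ℝ)) (q : (Fin n → ℝ) → Fin n → ℝ)
    (t : (Fin n → ℝ) → ℝ) : Prop :=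
  ∀ v ∈ D, ∀ σ : Equiv.Perm (Fin n), (∀ i, q (v ∘ σ) i = q v (σ i)) ∧ t (v ∘ σ) = t v

def RankPreserving {n : ℕ} (D : Set (Fin n → ℝ))
    (q : (Fin n → ℝ) → Fin n → ℝ) : Prop :=
  ∀ v ∈ D, ∀ i j : Fin n, v i > v j → q v i ≥ q v j

/-!
Sort both type vectors into the cone: with `v ∘ σ` and `v' ∘ τ` decreasing, symmetry makes the
mechanism treat them exactly as `v` and `v'`, so cone IC bounds `v`'s utility below by
`∑ i, v (σ i) * q v' (τ i) - t v'`. Rank preservation makes `q v' ∘ τ` decreasing as well, and by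
the rearrangement inequality pairing two decreasing sequences beats any other pairing, in
particular the one in `dot v (q v')`.
-/

lemma dot_comp_perm {n : ℕ} (v w : Fin n → ℝ) (σ : Equiv.Perm (Fin n)) :
    dot (v ∘ σ) (w ∘ σ) = dot v w :=
  Equiv.sum_comp σ fun i => v i * w i

lemma exists_perm_strictAnti_comp {n : ℕ} {v : Fin n → ℝ} (hv : Function.Injective v) :
    ∃ σ : Equiv.Perm (Fin n), StrictAnti (v ∘ σ) := by
  have hsort : StrictMono (v ∘ Tuple.sort v) :=
    (Tuple.monotone_sort v).strictMono_of_injective (hv.comp (Tuple.sort v).injective)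
  exact ⟨Fin.revPerm.trans (Tuple.sort v), hsort.comp_strictAnti Fin.rev_strictAnti⟩

lemma comp_perm_mem_DH {n : ℕ} {vlo vhi : ℝ} {v : Fin n → ℝ} (hv : v ∈ DH n vlo vhi)
    (σ : Equiv.Perm (Fin n)) : v ∘ σ ∈ DH n vlo vhi :=
  ⟨fun i => hv.1 (σ i), hv.2.comp σ.injective⟩

lemma comp_perm_mem_DconeI {n : ℕ} {vlo vhi : ℝ} {v : Fin n → ℝ} (hv : v ∈ DH n vlo vhi)
    {σ : Equiv.Perm (Fin n)} (hσ : StrictAnti (v ∘ σ)) : v ∘ σ ∈ DconeI n vlo vhi :=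
  ⟨comp_perm_mem_DH hv σ, fun _ _ hij => hσ hij⟩

lemma RankPreserving.antitone_comp {n : ℕ} {D : Set (Fin n → ℝ)}
    {q : (Fin n → ℝ) → Fin n → ℝ} (hrp : RankPreserving D q) {v : Fin n → ℝ} (hv : v ∈ D)
    {σ : Equiv.Perm (Fin n)} (hσ : StrictAnti (v ∘ σ)) : Antitone (q v ∘ σ) := by
  intro i j hij
  rcases hij.lt_or_eq with hlt | rfl
  · exact hrp v hv (σ i) (σ j) (hσ hlt)
  · rfl

lemma Symmetric'.comp_perm {n : ℕ} {D : Set (Fin n → ℝ)} {q : (Fin n → ℝ) → Fin n → ℝ}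
    {t : (Fin n → ℝ) → ℝ} (hsym : Symmetric' D q t) {v : Fin n → ℝ} (hv : v ∈ D)
    (σ : Equiv.Perm (Fin n)) : q (v ∘ σ) = q v ∘ σ ∧ t (v ∘ σ) = t v :=
  ⟨funext (hsym v hv σ).1, (hsym v hv σ).2⟩

lemma dot_le_dot_comp_of_antitone {n : ℕ} {x y : Fin n → ℝ} {σ τ : Equiv.Perm (Fin n)}
    (hx : Antitone (x ∘ σ)) (hy : Antitone (y ∘ τ)) : dot x y ≤ dot (x ∘ σ) (y ∘ τ) :=
  calc dot x y = ∑ i, (x ∘ σ) i * (y ∘ τ) ((σ.trans τ.symm) i) := by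
        rw [← dot_comp_perm x y σ]; simp [dot]
    _ ≤ dot (x ∘ σ) (y ∘ τ) := (hx.monovary hy).sum_mul_comp_perm_le_sum_mul

theorem symmetric_rank_preserving_coneIC_implies_IC_general
    (n : ℕ) (vlo vhi : ℝ)
    (q : (Fin n → ℝ) → Fin n → ℝ) (t : (Fin n → ℝ) → ℝ)
    (hsym : Symmetric' (DH n vlo vhi) q t)
    (hrp : RankPreserving (DH n vlo vhi) q)
    (hICcone : IC (DconeI n vlo vhi) q t) :
    IC (DH n vlo vhi) q t := by
  intro v hv v' hv'
  obtain ⟨σ, hσ⟩ := exists_perm_strictAnti_comp hv.2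
  obtain ⟨τ, hτ⟩ := exists_perm_strictAnti_comp hv'.2
  obtain ⟨hqσ, htσ⟩ := hsym.comp_perm hv σ
  obtain ⟨hqτ, htτ⟩ := hsym.comp_perm hv' τ
  have hrearr : dot v (q v') ≤ dot (v ∘ σ) (q v' ∘ τ) :=
    dot_le_dot_comp_of_antitone hσ.antitone (hrp.antitone_comp hv' hτ)
  calc dot v (q v) - t v = dot (v ∘ σ) (q (v ∘ σ)) - t (v ∘ σ) := by
        rw [hqσ, htσ, dot_comp_perm]
    _ ≥ dot (v ∘ σ) (q (v' ∘ τ)) - t (v' ∘ τ) :=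
        hICcone _ (comp_perm_mem_DconeI hv hσ) _ (comp_perm_mem_DconeI hv' hτ)
    _ ≥ dot v (q v') - t v' := by rw [hqτ, htτ]; linarith

/-- A symmetric, rank-preserving mechanism that is IC on the
decreasing cone D(σ^I) is IC on all of D^H. -/
theorem symmetric_rank_preserving_coneIC_implies_IC
    (n : ℕ) (vlo vhi : ℝ)
    (q : (Fin n → ℝ) → Fin n → ℝ) (t : (Fin n → ℝ) → ℝ)
    (hq01 : ∀ v ∈ DH n vlo vhi, ∀ i, q v i ∈ Set.Icc (0:ℝ) 1)
    (hsym : Symmetric' (DH n vlo vhi) q t)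
    (hrp : RankPreserving (DH n vlo vhi) q)
    (hICcone : IC (DconeI n vlo vhi) q t) :
    IC (DH n vlo vhi) q t :=
  symmetric_rank_preserving_coneIC_implies_IC_general n vlo vhi q t hsym hrp hICcone

end
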